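/- Let u₀ be a first eigenfunction of the Laplacian on a compact Riemannian surface (Δ_g u₀ = λ₁ u₀, u₀ ≢ 0, ∫_Σ u₀ dv_g = 0), let α ≥ λ₁, and h > 0 continuous. Then J_{α,8π}(t u₀) ≤ -4π t·u₀(x₀) - 8π·log∫_{B_δ(x₀)} h dv_g for all t > 0, where x₀, δ are such that u₀ ≥ u₀(x₀)/2 > 0 on B_δ(x₀). Consequently J_{α,8π}(t u₀) → -∞ as t → +∞ and inf_{u∈H} J_{α,8π}(u) = -∞. -/
import Mathlib


open MeasureTheory Filter Topology Real

/-- Assertion (ii) of Theorem 1.1, in an abstract metric-measure setting: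
if `u₀` is a first eigenfunction (so its Dirichlet energy is
`E u₀ = λ₁ ∫ u₀²` and `E` is quadratic on the line `t u₀`), `α ≥ λ₁`,
`h > 0`, and `u₀ ≥ u₀(x₀)/2 > 0` on `B_δ(x₀)`, then
`J_{α,8π}(t u₀) ≤ -4π t u₀(x₀) - 8π log ∫_{B_δ(x₀)} h dμ` for all `t > 0`,
and hence `J_{α,8π}(t u₀) → -∞` as `t → +∞`. -/
theorem stmt13 {S : Type*} [MetricSpace S] [MeasurableSpace S]
    (μ : Measure S) [IsFiniteMeasure μ]
    (E : (S → ℝ) → ℝ) (lam α : ℝ) (hα : lam ≤ α)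
    (u₀ : S → ℝ) (hu₀int : Integrable u₀ μ)
    (hmean : (∫ x, u₀ x ∂μ) = 0)
    (hsq : Integrable (fun x => (u₀ x) ^ 2) μ)
    (heig : E u₀ = lam * ∫ x, (u₀ x) ^ 2 ∂μ)
    (hquad : ∀ t : ℝ, E (fun x => t * u₀ x) = t ^ 2 * E u₀)
    (h : S → ℝ) (hh : ∀ x, 0 < h x)
    (hhexp : ∀ t : ℝ, Integrable (fun x => h x * Real.exp (t * u₀ x)) μ)
    (x₀ : S) (δ : ℝ) (hδ : 0 < δ) (hx₀ : 0 < u₀ x₀)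
    (hlower : ∀ x ∈ Metric.ball x₀ δ, u₀ x₀ / 2 ≤ u₀ x)
    (hB : 0 < ∫ x in Metric.ball x₀ δ, h x ∂μ)
    (J : ℝ → ℝ)
    (hJ : ∀ t, J t =
      (1 / 2) * (E (fun x => t * u₀ x) - α * ∫ x, (t * u₀ x) ^ 2 ∂μ) -
        8 * π * Real.log (∫ x, h x * Real.exp (t * u₀ x) ∂μ)) :
    (∀ t : ℝ, 0 < t →
        J t ≤ -4 * π * t * u₀ x₀ -
          8 * π * Real.log (∫ x in Metric.ball x₀ δ, h x ∂μ)) ∧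
      Tendsto J atTop atBot := by
  set A : ℝ := ∫ x in Metric.ball x₀ δ, h x ∂μ with hA
  have key : ∀ t : ℝ, 0 < t →
      J t ≤ -4 * π * t * u₀ x₀ - 8 * π * Real.log A := by
    intro t ht
    rw [hJ t, hquad t]
    have hint2 : (∫ x, (t * u₀ x) ^ 2 ∂μ) = t ^ 2 * ∫ x, (u₀ x) ^ 2 ∂μ := by
      simp_rw [mul_pow]
      exact integral_const_mul _ _
    have hE : t ^ 2 * E u₀ - α * ∫ x, (t * u₀ x) ^ 2 ∂μ ≤ 0 := by
      rw [hint2, heig]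
      have h1 : (0:ℝ) ≤ ∫ x, (u₀ x) ^ 2 ∂μ :=
        integral_nonneg fun x => sq_nonneg _
      nlinarith [mul_nonneg (mul_nonneg (sq_nonneg t) (sub_nonneg.mpr hα)) h1]
    have hc : t * u₀ x₀ / 2 = t * (u₀ x₀ / 2) := by ring
    -- a.e. lower bound for u₀ on the restricted measure
    have haeball : ∀ᵐ x ∂(μ.restrict (Metric.ball x₀ δ)), u₀ x₀ / 2 ≤ u₀ x := by
      have hgm := hu₀int.1
      have haeg : u₀ =ᵐ[μ] hgm.mk u₀ := hgm.ae_eq_mk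
      have hM : MeasurableSet {x | hgm.mk u₀ x < u₀ x₀ / 2} :=
        measurableSet_lt hgm.stronglyMeasurable_mk.measurable measurable_const
      have h0 : μ ({x | hgm.mk u₀ x < u₀ x₀ / 2} ∩ Metric.ball x₀ δ) = 0 := by
        refine measure_mono_null ?_ (ae_iff.mp haeg)
        rintro x ⟨hx1, hx2⟩
        have hlo := hlower x hx2
        intro heq
        rw [heq] at hlo
        exact absurd hx1 (not_lt.mpr hlo)
      have hν : μ.restrict (Metric.ball x₀ δ) {x | hgm.mk u₀ x < u₀ x₀ / 2} = 0 := by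
        rw [Measure.restrict_apply hM]; exact h0
      have hg_ae : ∀ᵐ x ∂(μ.restrict (Metric.ball x₀ δ)), u₀ x₀ / 2 ≤ hgm.mk u₀ x := by
        rw [ae_iff]
        simpa only [not_le] using hν
      have hu_ae : u₀ =ᵐ[μ.restrict (Metric.ball x₀ δ)] hgm.mk u₀ :=
        haeg.filter_mono (ae_mono Measure.restrict_le_self)
      filter_upwards [hg_ae, hu_ae] with x h1 h2
      rw [h2]; exact h1
    have hhint : Integrable h μ := by simpa using hhexp 0
    have hball : Real.exp (t * u₀ x₀ / 2) * A ≤ ∫ x, h x * Real.exp (t * u₀ x) ∂μ := by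
      have h1 : Real.exp (t * u₀ x₀ / 2) * A
          = ∫ x in Metric.ball x₀ δ, h x * Real.exp (t * u₀ x₀ / 2) ∂μ := by
        rw [hA, mul_comm, ← integral_mul_const]
      have h2 : (∫ x in Metric.ball x₀ δ, h x * Real.exp (t * u₀ x₀ / 2) ∂μ)
          ≤ ∫ x in Metric.ball x₀ δ, h x * Real.exp (t * u₀ x) ∂μ := by
        refine integral_mono_ae (hhint.mul_const _).restrict ((hhexp t)).restrict ?_
        filter_upwards [haeball] with x hx
        have hexp : Real.exp (t * u₀ x₀ / 2) ≤ Real.exp (t * u₀ x) := by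
          apply Real.exp_le_exp.mpr
          rw [hc]
          exact mul_le_mul_of_nonneg_left hx ht.le
        exact mul_le_mul_of_nonneg_left hexp (hh x).le
      have h3 : (∫ x in Metric.ball x₀ δ, h x * Real.exp (t * u₀ x) ∂μ)
          ≤ ∫ x, h x * Real.exp (t * u₀ x) ∂μ := by
        apply setIntegral_le_integral (hhexp t)
        filter_upwards with x
        exact mul_nonneg (hh x).le (Real.exp_nonneg _)
      linarith [h1 ▸ h2]
    have hlog : t * u₀ x₀ / 2 + Real.log A ≤
        Real.log (∫ x, h x * Real.exp (t * u₀ x) ∂μ) := by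
      have hpos : 0 < Real.exp (t * u₀ x₀ / 2) * A :=
        mul_pos (Real.exp_pos _) hB
      calc t * u₀ x₀ / 2 + Real.log A
          = Real.log (Real.exp (t * u₀ x₀ / 2) * A) := by
            rw [Real.log_mul (Real.exp_ne_zero _) (ne_of_gt hB), Real.log_exp]
        _ ≤ _ := Real.log_le_log hpos hball
    have hπ : (0:ℝ) < π := Real.pi_pos
    nlinarith [hlog, hE]
  refine ⟨key, ?_⟩
  have hlin : Tendsto (fun t : ℝ => -4 * π * t * u₀ x₀ - 8 * π * Real.log A)
      atTop atBot := by
    have h1 : Tendsto (fun t : ℝ => (-4 * π * u₀ x₀) * t) atTop atBot := by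
      apply tendsto_id.const_mul_atTop_of_neg
      have := Real.pi_pos
      nlinarith
    have h2 := h1.atBot_add (tendsto_const_nhds (x := -(8 * π * Real.log A)))
    refine h2.congr fun t => by ring
  refine tendsto_atBot_mono' atTop ?_ hlin
  filter_upwards [eventually_gt_atTop 0] with t ht
  exact key t ht
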